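/- arXiv:1104.4605 — 2 statements merged into one kernel-verified Lean document; each statement's English description precedes it below -/
import Mathlib

section
/- Let 2 ≤ j ≤ k₁ < k₂ < ⋯ < k_ℓ ≤ n and let A be the concatenated normalized Radon matrix whose rows are indexed by the j-element subsets of {1,…,n} and whose columns are indexed by all subsets σ of {1,…,n} with |σ| ∈ {k₁,…,k_ℓ}, the column for σ having entry 1/√(C(|σ|,j)) at each j-element subset contained in σ and 0 elsewhere. Let x₀ be a vector supported on a set T of such column-index subsets, and suppose the members of T are pairwise disjoint. Then x₀ is the unique solution of the problem: minimize ‖x‖₁ subject to A x = A x₀. -/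
/-!
Let `T` be the support of `x₀` and `h = y - x₀ ∈ ker A`. The columns of `A` have unit norm and
Gram entries `C(|s ∩ t|, j) / √(C(|s|, j) C(|t|, j))`, so disjointness makes the columns on `T`
orthonormal, and `AᵀA h = 0` expresses each `h t`, `t ∈ T`, through the values of `h` off `T`.
This yields the null space property `∑_T |h| < ∑_{Tᶜ} |h|` as soon as every column sum
`∑_{t ∈ T} (AᵀA) t σ`, `σ ∉ T`, is `< 1`. Each summand is at most `|t ∩ σ| / |σ|`, with strict
inequality when it is nonzero, because `k ↦ C(k, j) / k²` is strictly increasing for `j ≥ 2`;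
and `∑_t |t ∩ σ| ≤ |σ|` by disjointness.
-/

open scoped Classical
open Finset Matrix

noncomputable section

/-- The normalized Radon matrix `R^{j,k}`: rows are indexed by `j`-element subsets of
`{1,…,n}`, columns by `k`-element subsets, with entry `1/√(C(k,j))` if the row set is
contained in the column set and `0` otherwise. -/
def radon (n j k : ℕ) :
    Matrix {σ : Finset (Fin n) // σ.card = j} {τ : Finset (Fin n) // τ.card = k} ℝ :=
  fun σ τ => if σ.1 ⊆ τ.1 then 1 / Real.sqrt (k.choose j) else 0

/-- The submatrix of `A` consisting of the columns indexed by `T`. -/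
def colSub {m p R : Type*} (A : Matrix m p R) (T : Finset p) :
    Matrix m {x // x ∈ T} R :=
  fun i t => A i t.1

/-- Maximum absolute row sum of a matrix, `‖M‖_∞`. -/
def matInfNorm {m p : Type*} [Fintype p] (M : Matrix m p ℝ) : ℝ :=
  ⨆ i, ∑ j, |M i j|

/-- Maximum absolute column sum of a matrix, `‖M‖₁`. -/
def matOneNorm {m p : Type*} [Fintype m] (M : Matrix m p ℝ) : ℝ :=
  ⨆ j, ∑ i, |M i j|

/-- `ℓ¹` norm of a vector. -/
def vecOneNorm {m : Type*} [Fintype m] (u : m → ℝ) : ℝ := ∑ i, |u i|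

/-- `ℓ^∞` norm of a vector. -/
def vecInfNorm {m : Type*} (u : m → ℝ) : ℝ := ⨆ i, |u i|

def NullSpaceProperty {m p : Type*} [Fintype p] (A : Matrix m p ℝ) (T : Finset p) : Prop :=
  ∀ h : p → ℝ, A *ᵥ h = 0 → h ≠ 0 → ∑ i ∈ T, |h i| < ∑ i ∈ Tᶜ, |h i|

theorem NullSpaceProperty.vecOneNorm_lt {m p : Type*} [Fintype p]
    {A : Matrix m p ℝ} {T : Finset p} (hA : NullSpaceProperty A T) {x₀ y : p → ℝ}
    (hx₀ : ∀ i ∉ T, x₀ i = 0) (hy : A *ᵥ y = A *ᵥ x₀) (hne : y ≠ x₀) :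
    vecOneNorm x₀ < vecOneNorm y := by
  have hnsp := hA (y - x₀) (by rw [mulVec_sub, hy, sub_self]) (sub_ne_zero.mpr hne)
  have htri : ∀ i, |x₀ i| - |(y - x₀) i| ≤ |y i| := fun i => by
    rw [Pi.sub_apply, abs_sub_comm]
    linarith [abs_sub_abs_le_abs_sub (x₀ i) (y i)]
  have hout : ∀ i ∈ Tᶜ, |(y - x₀) i| = |y i| := fun i hi => by
    simp [hx₀ i (mem_compl.mp hi)]
  have hx₀_norm : vecOneNorm x₀ = ∑ i ∈ T, |x₀ i| := by
    rw [vecOneNorm, ← sum_add_sum_compl T,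
      sum_eq_zero (s := Tᶜ) fun i hi => by rw [hx₀ i (mem_compl.mp hi), abs_zero], add_zero]
  have hy_norm : vecOneNorm y = ∑ i ∈ T, |y i| + ∑ i ∈ Tᶜ, |(y - x₀) i| := by
    rw [vecOneNorm, ← sum_add_sum_compl T, sum_congr rfl hout]
  have hT : ∑ i ∈ T, |x₀ i| - ∑ i ∈ T, |(y - x₀) i| ≤ ∑ i ∈ T, |y i| := by
    rw [← sum_sub_distrib]
    exact sum_le_sum fun i _ => htri i
  linarith

section Gram

variable {m p : Type*} [Fintype m] [Fintype p] {A : Matrix m p ℝ} {T : Finset p}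

theorem eq_neg_sum_compl_of_mulVec_eq_zero (hdiag : ∀ t ∈ T, (Aᵀ * A) t t = 1)
    (horth : ∀ s ∈ T, ∀ t ∈ T, s ≠ t → (Aᵀ * A) s t = 0) {h : p → ℝ} (hAh : A *ᵥ h = 0)
    {t : p} (ht : t ∈ T) : h t = -∑ σ ∈ Tᶜ, (Aᵀ * A) t σ * h σ := by
  have hG : ((Aᵀ * A) *ᵥ h) t = 0 := by rw [← mulVec_mulVec, hAh, mulVec_zero, Pi.zero_apply]
  rw [mulVec, dotProduct, ← sum_add_sum_compl T, sum_eq_single_of_mem t ht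
    fun s hs hst => by rw [horth t ht s hs hst.symm, zero_mul], hdiag t ht, one_mul] at hG
  linarith

theorem nullSpaceProperty_of_gram (hdiag : ∀ t ∈ T, (Aᵀ * A) t t = 1)
    (horth : ∀ s ∈ T, ∀ t ∈ T, s ≠ t → (Aᵀ * A) s t = 0)
    (hcol : ∀ σ ∉ T, ∑ t ∈ T, |(Aᵀ * A) t σ| < 1) : NullSpaceProperty A T := by
  intro h hAh hne
  have hrep := fun t (ht : t ∈ T) => eq_neg_sum_compl_of_mulVec_eq_zero hdiag horth hAh ht
  have hbound : ∑ t ∈ T, |h t| ≤ ∑ σ ∈ Tᶜ, (∑ t ∈ T, |(Aᵀ * A) t σ|) * |h σ| :=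
    calc ∑ t ∈ T, |h t| ≤ ∑ t ∈ T, ∑ σ ∈ Tᶜ, |(Aᵀ * A) t σ| * |h σ| :=
          sum_le_sum fun t ht => by
            rw [hrep t ht, abs_neg]
            exact (abs_sum_le_sum_abs _ _).trans_eq (by simp only [abs_mul])
      _ = ∑ σ ∈ Tᶜ, (∑ t ∈ T, |(Aᵀ * A) t σ|) * |h σ| := by
          rw [sum_comm]
          simp only [sum_mul]
  obtain ⟨σ, hσ, hσ0⟩ : ∃ σ ∈ Tᶜ, h σ ≠ 0 := by
    by_contra! hzero
    refine hne (funext fun i => ?_)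
    by_cases hi : i ∈ T
    · rw [hrep i hi, sum_eq_zero fun σ hσ => by rw [hzero σ hσ, mul_zero], neg_zero,
        Pi.zero_apply]
    · exact hzero i (mem_compl.mpr hi)
  refine hbound.trans_lt (sum_lt_sum (fun σ hσ => ?_) ⟨σ, hσ, ?_⟩)
  · exact mul_le_of_le_one_left (abs_nonneg _) (hcol σ (mem_compl.mp hσ)).le
  · exact mul_lt_of_lt_one_left (abs_pos.mpr hσ0) (hcol σ (mem_compl.mp hσ))

end Gram

theorem Nat.choose_mul_succ_sq_lt {j k : ℕ} (hj : 2 ≤ j) (hjk : j ≤ k) :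
    k.choose j * (k + 1) ^ 2 < (k + 1).choose j * k ^ 2 := by
  obtain ⟨d, rfl⟩ := Nat.exists_eq_add_of_le hjk
  have hrec := Nat.choose_mul_succ_eq (j + d) j
  rw [show j + d + 1 - j = d + 1 by omega] at hrec
  have hpos := Nat.choose_pos (show j ≤ j + d + 1 by omega)
  have hkey : (d + 1) * (j + d + 1) < (j + d) ^ 2 := by nlinarith
  calc (j + d).choose j * (j + d + 1) ^ 2
      = (j + d + 1).choose j * ((d + 1) * (j + d + 1)) := by rw [sq, ← mul_assoc, hrec]; ring
    _ < (j + d + 1).choose j * (j + d) ^ 2 := Nat.mul_lt_mul_of_pos_left hkey hpos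

theorem choose_div_sq_strictMonoOn {j : ℕ} (hj : 2 ≤ j) :
    StrictMonoOn (fun k : ℕ => (k.choose j : ℝ) / k ^ 2) (Set.Ici j) := by
  refine strictMonoOn_of_lt_succ Set.ordConnected_Ici fun k _ hk_mem _ => ?_
  have hk : j ≤ k := hk_mem
  have hk0 : (0 : ℝ) < k := by exact_mod_cast (show 0 < k by omega)
  simp only [Order.succ_eq_add_one]
  rw [div_lt_div_iff₀ (by positivity) (by positivity)]
  exact_mod_cast Nat.choose_mul_succ_sq_lt hj hk

theorem choose_div_sqrt_mul_sqrt_lt {j a k k' : ℕ} (hj : 2 ≤ j) (hja : j ≤ a) (hak : a ≤ k)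
    (hak' : a ≤ k') (hne : a ≠ k ∨ a ≠ k') :
    (a.choose j : ℝ) / (√(k'.choose j) * √(k.choose j)) < a / k := by
  have hmono := choose_div_sq_strictMonoOn hj
  have ha0 : (0 : ℝ) < a := by exact_mod_cast (show 0 < a by omega)
  have hCk : (0 : ℝ) < k.choose j := by exact_mod_cast Nat.choose_pos (hja.trans hak)
  have hCk' : (0 : ℝ) < k'.choose j := by exact_mod_cast Nat.choose_pos (hja.trans hak')
  have hk0 : (0 : ℝ) < k := ha0.trans_le (by exact_mod_cast hak)
  have hkey : (a.choose j : ℝ) ^ 2 * k ^ 2 < a ^ 2 * (k'.choose j * k.choose j) := by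
    rcases hak.lt_or_eq with hlt | rfl
    · have hmono_ak := hmono hja (hja.trans hak) hlt
      have hle : (a.choose j : ℝ) ≤ k'.choose j := by exact_mod_cast Nat.choose_le_choose j hak'
      simp only at hmono_ak
      rw [div_lt_div_iff₀ (by positivity) (by positivity)] at hmono_ak
      nlinarith [mul_le_mul_of_nonneg_right hle (by positivity : (0 : ℝ) ≤ a.choose j * k ^ 2),
        mul_lt_mul_of_pos_left hmono_ak hCk']
    · have hlt : a < k' := lt_of_le_of_ne hak' (hne.resolve_left (absurd rfl))
      have hmono_ak' := hmono hja (hja.trans hak') hlt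
      simp only at hmono_ak'
      have hsq : (a : ℝ) ^ 2 ≤ k' ^ 2 := by gcongr
      have hCa_lt : (a.choose j : ℝ) < k'.choose j := by
        have := hmono_ak'.trans_le (div_le_div_of_nonneg_left hCk'.le (by positivity) hsq)
        rwa [div_lt_div_iff_of_pos_right (by positivity)] at this
      nlinarith [mul_lt_mul_of_pos_left hCa_lt (by positivity : (0 : ℝ) < a ^ 2 * a.choose j)]
  rw [div_lt_div_iff₀ (by positivity) hk0]
  refine lt_of_pow_lt_pow_left₀ 2 (by positivity) ?_
  rw [mul_pow, mul_pow, mul_pow, Real.sq_sqrt hCk'.le, Real.sq_sqrt hCk.le]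
  exact hkey

theorem sum_choose_card_inter_div_lt_one {ι α : Type*} [DecidableEq α] {j : ℕ} (hj : 2 ≤ j)
    (s : ι → Finset α) (T : Finset ι) (u : Finset α) (hdisj : (T : Set ι).PairwiseDisjoint s)
    (hju : j ≤ u.card) (hne : ∀ t ∈ T, s t ≠ u) :
    ∑ t ∈ T, ((s t ∩ u).card.choose j : ℝ) / (√((s t).card.choose j) * √(u.card.choose j))
      < 1 := by
  have hu0 : (0 : ℝ) < u.card := by exact_mod_cast (show 0 < u.card by omega)
  have hlt : ∀ t ∈ T, j ≤ (s t ∩ u).card →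
      ((s t ∩ u).card.choose j : ℝ) / (√((s t).card.choose j) * √(u.card.choose j))
        < (s t ∩ u).card / u.card := by
    intro t ht hj_le
    refine choose_div_sqrt_mul_sqrt_lt hj hj_le (card_le_card inter_subset_right)
      (card_le_card inter_subset_left) ?_
    by_contra! h
    exact hne t ht ((eq_of_subset_of_card_le inter_subset_left h.2.ge).symm.trans
      (eq_of_subset_of_card_le inter_subset_right h.1.ge))
  have hle : ∀ t ∈ T,
      ((s t ∩ u).card.choose j : ℝ) / (√((s t).card.choose j) * √(u.card.choose j))
        ≤ (s t ∩ u).card / u.card := by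
    intro t ht
    by_cases hj_le : j ≤ (s t ∩ u).card
    · exact (hlt t ht hj_le).le
    · rw [Nat.choose_eq_zero_of_lt (not_le.mp hj_le)]
      simp only [Nat.cast_zero, zero_div]
      positivity
  have hsum : ∑ t ∈ T, ((s t ∩ u).card : ℝ) / u.card ≤ 1 := by
    rw [← sum_div, div_le_one hu0]
    have hcard : ∑ t ∈ T, (s t ∩ u).card ≤ u.card := by
      rw [← card_biUnion (hdisj.mono fun _ => inter_subset_left)]
      exact card_le_card (biUnion_subset.mpr fun _ _ => inter_subset_right)
    exact_mod_cast hcard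
  by_cases hex : ∃ t ∈ T, j ≤ (s t ∩ u).card
  · obtain ⟨t, ht, hj_le⟩ := hex
    exact (sum_lt_sum hle ⟨t, ht, hlt t ht hj_le⟩).trans_le hsum
  · push Not at hex
    rw [sum_eq_zero fun t ht => by rw [Nat.choose_eq_zero_of_lt (hex t ht)]; simp]
    exact one_pos

theorem card_filter_subset_eq_choose {α : Type*} [Fintype α] [DecidableEq α] (j : ℕ)
    (s : Finset α) :
    #{ρ : {ρ : Finset α // ρ.card = j} | ρ.1 ⊆ s} = s.card.choose j := by
  rw [← card_powersetCard]
  refine card_bij (fun ρ _ => ρ.1) (fun ρ hρ => ?_) (fun _ _ _ _ h => Subtype.ext h)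
    (fun t ht => ?_)
  · exact mem_powersetCard.mpr ⟨(mem_filter.mp hρ).2, ρ.2⟩
  · obtain ⟨hts, htj⟩ := mem_powersetCard.mp ht
    exact ⟨⟨t, htj⟩, mem_filter.mpr ⟨mem_univ _, hts⟩, rfl⟩

def mixedRadon (α : Type*) [DecidableEq α] (j : ℕ) (ks : Finset ℕ) :
    Matrix {ρ : Finset α // ρ.card = j} {σ : Finset α // σ.card ∈ ks} ℝ :=
  fun ρ σ => if ρ.1 ⊆ σ.1 then 1 / √((σ.1.card).choose j) else 0

theorem mixedRadon_transpose_mul_self_apply {α : Type*} [Fintype α] [DecidableEq α] (j : ℕ)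
    (ks : Finset ℕ) (s t : {σ : Finset α // σ.card ∈ ks}) :
    ((mixedRadon α j ks)ᵀ * mixedRadon α j ks) s t
      = ((s.1 ∩ t.1).card.choose j : ℝ) / (√((s.1.card).choose j) * √((t.1.card).choose j)) := by
  simp only [mul_apply, transpose_apply, mixedRadon, ite_mul, mul_ite, zero_mul, mul_zero]
  rw [← card_filter_subset_eq_choose j (s.1 ∩ t.1)]
  simp only [← ite_and, ← subset_inter_iff, sum_ite, sum_const_zero, add_zero, sum_const,
    nsmul_eq_mul, inter_comm t.1]
  field_simp

/-- mixed clique sizes: columns are indexed by all subsets of `{1,…,n}`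
whose cardinality lies in a given set `ks` of sizes in `[j, n]`; the column for `σ` has
entry `1/√(C(|σ|,j))` at each `j`-subset of `σ`. If the support of `x₀` consists of
pairwise disjoint sets, then `x₀` is the unique `ℓ¹` minimizer subject to `Ax = Ax₀`. -/
theorem stmt18 (n j : ℕ) (hj : 2 ≤ j) (ks : Finset ℕ)
    (hks : ∀ k ∈ ks, j ≤ k ∧ k ≤ n)
    (x₀ : {σ : Finset (Fin n) // σ.card ∈ ks} → ℝ)
    (hdisj : ∀ σ₁ σ₂ : {σ : Finset (Fin n) // σ.card ∈ ks},
      x₀ σ₁ ≠ 0 → x₀ σ₂ ≠ 0 → σ₁ ≠ σ₂ → Disjoint σ₁.1 σ₂.1) :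
    let A : Matrix {ρ : Finset (Fin n) // ρ.card = j}
        {σ : Finset (Fin n) // σ.card ∈ ks} ℝ :=
      fun ρ σ => if ρ.1 ⊆ σ.1 then 1 / Real.sqrt ((σ.1.card).choose j) else 0
    ∀ y, A.mulVec y = A.mulVec x₀ → y ≠ x₀ → vecOneNorm x₀ < vecOneNorm y := by
  show ∀ y, mixedRadon (Fin n) j ks *ᵥ y = mixedRadon (Fin n) j ks *ᵥ x₀ → y ≠ x₀ →
    vecOneNorm x₀ < vecOneNorm y
  intro y hy hne
  have hcard (σ : {σ : Finset (Fin n) // σ.card ∈ ks}) : j ≤ σ.1.card := (hks _ σ.2).1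
  set T := univ.filter fun σ => x₀ σ ≠ 0
  have hT : (T : Set _).PairwiseDisjoint Subtype.val := fun s hs t ht =>
    hdisj s t (by simpa [T] using hs) (by simpa [T] using ht)
  refine (nullSpaceProperty_of_gram (T := T) ?_ ?_ ?_).vecOneNorm_lt
    (fun i hi => by simpa [T] using hi) hy hne <;> simp only [mixedRadon_transpose_mul_self_apply]
  · intro t _
    have hC : (0 : ℝ) < (t.1.card).choose j := by exact_mod_cast Nat.choose_pos (hcard t)
    rw [inter_self, Real.mul_self_sqrt hC.le, div_self hC.ne']
  · intro s hs t ht hst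
    rw [disjoint_iff_inter_eq_empty.mp (hT hs ht hst), card_empty,
      Nat.choose_eq_zero_of_lt (by omega), Nat.cast_zero, zero_div]
  · intro σ hσ
    simp only [abs_div, abs_mul, Nat.abs_cast, abs_of_nonneg (Real.sqrt_nonneg _)]
    exact sum_choose_card_inter_div_lt_one hj Subtype.val T σ.1 hT (hcard σ)
      fun t ht heq => hσ (Subtype.ext heq ▸ ht)
end
end

section
/- For all integers j ≥ 2 and n₁, n₂ ≥ j, one has √(C(n₁, j)) + √(C(n₂, j)) < √(C(n₁ + n₂, j)). -/
open scoped Classical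
open Finset Matrix

noncomputable section

/-!
Write `a = C(n₁,j)`, `b = C(n₂,j)`. By Vandermonde, `C(n₁+n₂,j) = a + b + s` where `s` collects
the mixed terms `C(n₁,i) C(n₂,j-i)`, `0 < i < j`; squaring, the claim becomes `4ab < s²`.
The terms `i = 1` and `i = j - 1` show `x = n₁ C(n₂,j-1) ≤ s` and `y = n₂ C(n₁,j-1) ≤ s`, while
`j C(n,j) = (n-j+1) C(n,j-1) < n C(n,j-1)` gives `4ab ≤ j²ab < xy ≤ s²`.
-/

namespace Nat

theorem mul_choose_lt_mul_choose_sub_one {n j : ℕ} (hj : 2 ≤ j) (hjn : j ≤ n + 1) :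
    j * n.choose j < n * n.choose (j - 1) := by
  have hrec : n.choose j * j = n.choose (j - 1) * (n - (j - 1)) := by
    simpa [Nat.sub_add_cancel (by omega : 1 ≤ j)] using Nat.choose_succ_right_eq n (j - 1)
  have hpos : 0 < n.choose (j - 1) := Nat.choose_pos (by omega)
  calc j * n.choose j = n.choose (j - 1) * (n - (j - 1)) := by rw [mul_comm, hrec]
    _ < n.choose (j - 1) * n := Nat.mul_lt_mul_of_pos_left (by omega) hpos
    _ = n * n.choose (j - 1) := mul_comm _ _

theorem choose_add_choose_add_mul_choose_sub_one_le (n₁ n₂ : ℕ) {j : ℕ} (hj : 2 ≤ j) :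
    n₁.choose j + n₂.choose j + n₁ * n₂.choose (j - 1) ≤ (n₁ + n₂).choose j := by
  have hsub : ({(j, 0), (0, j), (1, j - 1)} : Finset (ℕ × ℕ)) ⊆ HasAntidiagonal.antidiagonal j := by
    intro p hp
    simp only [mem_insert, mem_singleton] at hp
    rcases hp with rfl | rfl | rfl <;> simp only [HasAntidiagonal.mem_antidiagonal] <;> omega
  rw [Nat.add_choose_eq]
  refine le_trans (le_of_eq ?_) (sum_le_sum_of_subset hsub)
  rw [sum_insert (by simp only [mem_insert, mem_singleton, Prod.mk.injEq]; omega),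
    sum_insert (by simp only [mem_singleton, Prod.mk.injEq]; omega), sum_singleton]
  simp only [Nat.choose_zero_right, Nat.choose_one_right, Nat.mul_one, Nat.one_mul]
  ring

theorem four_mul_choose_mul_choose_lt_sq {j n₁ n₂ s : ℕ} (hj : 2 ≤ j) (h1 : j ≤ n₁ + 1)
    (h2 : j ≤ n₂ + 1) (hs : (n₁ + n₂).choose j = n₁.choose j + n₂.choose j + s) :
    4 * (n₁.choose j * n₂.choose j) < s ^ 2 := by
  have hx := choose_add_choose_add_mul_choose_sub_one_le n₁ n₂ hj
  have hy := choose_add_choose_add_mul_choose_sub_one_le n₂ n₁ hj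
  rw [add_comm n₂] at hy
  calc 4 * (n₁.choose j * n₂.choose j) ≤ (j * n₁.choose j) * (j * n₂.choose j) := by
        nlinarith [Nat.mul_le_mul hj hj, Nat.zero_le (n₁.choose j * n₂.choose j)]
    _ < (n₁ * n₁.choose (j - 1)) * (n₂ * n₂.choose (j - 1)) :=
        Nat.mul_lt_mul'' (mul_choose_lt_mul_choose_sub_one hj h1)
          (mul_choose_lt_mul_choose_sub_one hj h2)
    _ = (n₁ * n₂.choose (j - 1)) * (n₂ * n₁.choose (j - 1)) := by ring
    _ ≤ s ^ 2 := by rw [sq]; exact Nat.mul_le_mul (by omega) (by omega)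

end Nat

theorem Real.sqrt_add_sqrt_lt_sqrt_add_add {a b s : ℝ} (ha : 0 ≤ a) (hb : 0 ≤ b) (hs : 0 ≤ s)
    (h : 4 * (a * b) < s ^ 2) : √a + √b < √(a + b + s) := by
  rw [Real.lt_sqrt (by positivity)]
  have hcross : 2 * (√a * √b) < s := by
    refine lt_of_pow_lt_pow_left₀ 2 hs ?_
    calc (2 * (√a * √b)) ^ 2 = 4 * (a * b) := by
          rw [mul_pow, mul_pow, Real.sq_sqrt ha, Real.sq_sqrt hb]; norm_num
      _ < s ^ 2 := h
  nlinarith [Real.sq_sqrt ha, Real.sq_sqrt hb]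

/-- for `j ≥ 2` and `n₁, n₂ ≥ j`,
`√C(n₁,j) + √C(n₂,j) < √C(n₁+n₂,j)`. -/
theorem stmt19 (j n₁ n₂ : ℕ) (hj : 2 ≤ j) (h1 : j ≤ n₁) (h2 : j ≤ n₂) :
    Real.sqrt (n₁.choose j) + Real.sqrt (n₂.choose j) <
      Real.sqrt ((n₁ + n₂).choose j) := by
  obtain ⟨s, hs⟩ := Nat.exists_eq_add_of_le
    (le_trans (Nat.le_add_right _ _) (Nat.choose_add_choose_add_mul_choose_sub_one_le n₁ n₂ hj))
  have hsq := Nat.four_mul_choose_mul_choose_lt_sq hj (by omega) (by omega) hs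
  rw [hs, Nat.cast_add, Nat.cast_add]
  exact Real.sqrt_add_sqrt_lt_sqrt_add_add (Nat.cast_nonneg _) (Nat.cast_nonneg _)
    (Nat.cast_nonneg _) (by exact_mod_cast hsq)
end
end
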